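/- arXiv:0710.2555 — 6 statements merged into one kernel-verified Lean document; each statement's English description precedes it below -/
import Mathlib

section
/- If p is a partial metric on a set X, then the map q defined by q(x,y) = p(x,y) − p(x,x) is a quasi-metric (in the generalized sense allowing q(x,y)=q(y,x)=0 only when x=y) which is weightable by the weight function w(x) = p(x,x), i.e., q(x,y) + w(x) = q(y,x) + w(y) for all x,y. -/
/-- If `p` is a partial metric on `X`, then `q x y = p x y - p x x` is a
quasi-metric weightable by the weight `w x = p x x`. -/
theorem partialMetric_to_weightable_quasiMetric {X : Type*} (p : X → X → ℝ)
    (hnn : ∀ x y, 0 ≤ p x y)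
    (hssd : ∀ x y, p x x ≤ p x y)
    (hsep : ∀ x y, x = y ↔ (p x x = p y y ∧ p y y = p x y))
    (hsym : ∀ x y, p x y = p y x)
    (htri : ∀ x y z, p x z ≤ p x y + p y z - p y y) :
    (∀ x y, 0 ≤ p x y - p x x) ∧
    (∀ x y, ((p x y - p x x = 0) ∧ (p y x - p y y = 0)) ↔ x = y) ∧
    (∀ x y z, p x z - p x x ≤ (p x y - p x x) + (p y z - p y y)) ∧
    (∀ x, 0 ≤ p x x) ∧
    (∀ x y, (p x y - p x x) + p x x = (p y x - p y y) + p y y) := by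
  refine ⟨fun x y => by linarith [hssd x y], fun x y => ?_, fun x y z => by linarith [htri x y z], fun x => hnn x x, fun x y => by linarith [hsym x y]⟩
  constructor
  · rintro ⟨h1, h2⟩
    rw [hsep x y]
    have := hsym x y
    constructor <;> linarith
  · rintro rfl
    simp
end

section
/- If q is a quasi-metric on X weightable by a weight function w : X → ℝ≥0, then p defined by p(x,y) = q(x,y) + w(x) is a partial metric on X. -/
/-- If `q` is a quasi-metric on `X` weightable by `w : X → ℝ≥0`, then
`p x y = q x y + w x` is a partial metric on `X`. -/
theorem weightable_quasiMetric_to_partialMetric {X : Type*} (q : X → X → ℝ) (w : X → ℝ)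
    (hqnn : ∀ x y, 0 ≤ q x y)
    (hqsep : ∀ x y, (q x y = 0 ∧ q y x = 0) ↔ x = y)
    (hqtri : ∀ x y z, q x z ≤ q x y + q y z)
    (hwnn : ∀ x, 0 ≤ w x)
    (hweight : ∀ x y, q x y + w x = q y x + w y) :
    (∀ x y, 0 ≤ q x y + w x) ∧
    (∀ x y, q x x + w x ≤ q x y + w x) ∧
    (∀ x y, x = y ↔ ((q x x + w x = q y y + w y) ∧ (q y y + w y = q x y + w x))) ∧
    (∀ x y, q x y + w x = q y x + w y) ∧
    (∀ x y z, q x z + w x ≤ (q x y + w x) + (q y z + w y) - (q y y + w y)) := by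
  have hself : ∀ x, q x x = 0 := fun x => ((hqsep x x).mpr rfl).1
  refine ⟨fun x y => add_nonneg (hqnn x y) (hwnn x),
    fun x y => by have := hqnn x y; have := hself x; linarith,
    fun x y => ?_,
    hweight,
    fun x y z => by have := hqtri x y z; have := hself y; linarith⟩
  constructor
  · rintro rfl; exact ⟨rfl, by rw [hself]⟩
  · rintro ⟨h1, h2⟩
    have hx := hself x; have hy := hself y
    have hxy : q x y = 0 := by linarith
    have hyx : q y x = 0 := by have := hweight x y; linarith
    exact (hqsep x y).mp ⟨hxy, hyx⟩
end

section
/- Let Σ be a set, s : Σ × Σ → ℝ a sane scoring function, and γ, δ : Σ⁺ → ℝ positive subadditive gap penalties. Let S be the global (Needleman-Wunsch) similarity on Σ* extending s, γ, δ. Then for every word x ∈ Σ*, S(x,x) = Σᵢ s(xᵢ,xᵢ), and S is itself sane: S(x,x) > 0 for x ≠ e, S(x,x) ≥ S(x,y) and S(x,x) ≥ S(y,x) for all x,y. -/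
/-!
The diagonal score `T x = ∑ᵢ s(xᵢ, xᵢ)` is attained by the gap-free diagonal alignment of `x` with
itself, so `T x ≤ S(x, x)`. Conversely `S(x, y) ≤ min (T x) (T y)` by induction on `|x| + |y|`:
a match step adds `s(a, b) ≤ min (s(a, a)) (s(b, b))`, a gap step subtracts a nonnegative penalty
from the similarity of prefixes, whose diagonal scores are at most those of the full words since
`s(a, a) > 0`. Hence `S(x, x) = T x`, and saneness of `S` follows.
-/

section

variable {A : Type*}

def diagScore (s : A → A → ℝ) (x : List A) : ℝ := (x.map fun a => s a a).sum

section diagScore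

variable {s : A → A → ℝ}

@[simp]
theorem diagScore_nil : diagScore s [] = 0 := rfl

@[simp]
theorem diagScore_singleton (a : A) : diagScore s [a] = s a a := by
  simp [diagScore]

@[simp]
theorem diagScore_append (x y : List A) :
    diagScore s (x ++ y) = diagScore s x + diagScore s y := by
  simp [diagScore]

theorem diagScore_nonneg (hs : ∀ a, 0 ≤ s a a) (x : List A) : 0 ≤ diagScore s x :=
  List.sum_nonneg fun _ hr => by
    obtain ⟨a, -, rfl⟩ := List.mem_map.mp hr
    exact hs a

theorem diagScore_pos (hs : ∀ a, 0 < s a a) {x : List A} (hx : x ≠ []) : 0 < diagScore s x :=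
  List.sum_pos _ (fun _ hr => by
    obtain ⟨a, -, rfl⟩ := List.mem_map.mp hr
    exact hs a) (by simpa using hx)

theorem diagScore_take_le (hs : ∀ a, 0 ≤ s a a) (x : List A) (i : ℕ) :
    diagScore s (x.take i) ≤ diagScore s x := by
  conv_rhs => rw [← List.take_append_drop i x, diagScore_append]
  linarith [diagScore_nonneg hs (x.drop i)]

end diagScore

/-- `γ` penalises a block of the second word set against a gap, `δ` one of the first word.
In the gap terms `k` is the length of the gap and `n + 1 - k` that of the remaining prefix. -/
structure IsGlobalSimilarity (s : A → A → ℝ) (γ δ : List A → ℝ) (S : List A → List A → ℝ) :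
    Prop where
  nil_nil : S [] [] = 0
  nil_left : ∀ y : List A, y ≠ [] → S [] y = -γ y
  nil_right : ∀ x : List A, x ≠ [] → S x [] = -δ x
  append_singleton : ∀ (x y : List A) (a b : A),
      S (x ++ [a]) (y ++ [b]) =
        max (S x y + s a b)
          (max
            ((Finset.Icc 1 (y.length + 1)).sup'
              ⟨1, Finset.mem_Icc.mpr ⟨le_rfl, Nat.le_add_left 1 y.length⟩⟩
              (fun k => S (x ++ [a]) ((y ++ [b]).take (y.length + 1 - k))
                - γ ((y ++ [b]).drop (y.length + 1 - k))))
            ((Finset.Icc 1 (x.length + 1)).sup'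
              ⟨1, Finset.mem_Icc.mpr ⟨le_rfl, Nat.le_add_left 1 x.length⟩⟩
              (fun k => S ((x ++ [a]).take (x.length + 1 - k)) (y ++ [b])
                - δ ((x ++ [a]).drop (x.length + 1 - k)))))

theorem length_take_sub_lt {x : List A} {n k : ℕ} (hx : x.length = n + 1)
    (hk : k ∈ Finset.Icc 1 (n + 1)) : (x.take (n + 1 - k)).length < n + 1 := by
  rw [Finset.mem_Icc] at hk
  rw [List.length_take]
  omega

theorem drop_sub_ne_nil {x : List A} {n k : ℕ} (hx : x.length = n + 1)
    (hk : k ∈ Finset.Icc 1 (n + 1)) : x.drop (n + 1 - k) ≠ [] := by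
  rw [Finset.mem_Icc] at hk
  rw [Ne, List.drop_eq_nil_iff]
  omega

namespace IsGlobalSimilarity

variable {s : A → A → ℝ} {γ δ : List A → ℝ} {S : List A → List A → ℝ}

theorem diagScore_le (hS : IsGlobalSimilarity s γ δ S) (x : List A) : diagScore s x ≤ S x x := by
  induction x using List.reverseRecOn with
  | nil => simp [hS.nil_nil]
  | append_singleton x a ih =>
    rw [hS.append_singleton, diagScore_append, diagScore_singleton]
    exact le_max_of_le_left (by linarith)

theorem le_min_diagScore (hS : IsGlobalSimilarity s γ δ S) (hs : ∀ a, 0 ≤ s a a)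
    (hsl : ∀ a b, s a b ≤ s a a) (hsr : ∀ a b, s b a ≤ s a a)
    (hγ : ∀ u : List A, u ≠ [] → 0 ≤ γ u) (hδ : ∀ u : List A, u ≠ [] → 0 ≤ δ u)
    (x y : List A) : S x y ≤ min (diagScore s x) (diagScore s y) := by
  induction hn : x.length + y.length using Nat.strong_induction_on generalizing x y with
  | _ n ih =>
  rcases List.eq_nil_or_concat' x with rfl | ⟨x, a, rfl⟩
  · rcases eq_or_ne y [] with rfl | hy
    · simp [hS.nil_nil]
    · rw [hS.nil_left y hy, diagScore_nil]
      exact le_min (by linarith [hγ y hy]) (by linarith [hγ y hy, diagScore_nonneg hs y])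
  rcases List.eq_nil_or_concat' y with rfl | ⟨y, b, rfl⟩
  · have hx : x ++ [a] ≠ [] := by simp
    rw [hS.nil_right _ hx, diagScore_nil]
    exact le_min (by linarith [hδ _ hx, diagScore_nonneg hs (x ++ [a])]) (by linarith [hδ _ hx])
  have hxa : (x ++ [a]).length = x.length + 1 := by simp
  have hyb : (y ++ [b]).length = y.length + 1 := by simp
  rw [hS.append_singleton]
  refine max_le ?diag (max_le (Finset.sup'_le _ _ fun k hk => ?gapLeft)
    (Finset.sup'_le _ _ fun k hk => ?gapRight))
  case diag =>
    have := ih _ (by omega) x y rfl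
    simp only [diagScore_append, diagScore_singleton, le_min_iff] at this ⊢
    constructor <;> linarith [hsl a b, hsr b a]
  case gapLeft =>
    have hprefix := ih _ (by have := length_take_sub_lt hyb hk; omega)
      (x ++ [a]) ((y ++ [b]).take (y.length + 1 - k)) rfl
    have := min_le_min_left (diagScore s (x ++ [a]))
      (diagScore_take_le hs (y ++ [b]) (y.length + 1 - k))
    linarith [hγ _ (drop_sub_ne_nil hyb hk)]
  case gapRight =>
    have hprefix := ih _ (by have := length_take_sub_lt hxa hk; omega)
      ((x ++ [a]).take (x.length + 1 - k)) (y ++ [b]) rfl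
    have := min_le_min_right (diagScore s (y ++ [b]))
      (diagScore_take_le hs (x ++ [a]) (x.length + 1 - k))
    linarith [hδ _ (drop_sub_ne_nil hxa hk)]

end IsGlobalSimilarity

end

theorem globalSimilarity_sane_general {A : Type*} (s : A → A → ℝ) (γ δ : List A → ℝ)
    (S : List A → List A → ℝ)
    (hsane1 : ∀ a, 0 < s a a)
    (hsane2 : ∀ a b, s a b ≤ s a a)
    (hsane3 : ∀ a b, s b a ≤ s a a)
    (hγpos : ∀ u : List A, u ≠ [] → 0 < γ u)
    (hδpos : ∀ u : List A, u ≠ [] → 0 < δ u)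
    (hS0 : S [] [] = 0)
    (hSe1 : ∀ y : List A, y ≠ [] → S [] y = -γ y)
    (hSe2 : ∀ x : List A, x ≠ [] → S x [] = -δ x)
    (hSrec : ∀ (x y : List A) (a b : A),
      S (x ++ [a]) (y ++ [b]) =
        max (S x y + s a b)
          (max
            ((Finset.Icc 1 (y.length + 1)).sup'
              ⟨1, Finset.mem_Icc.mpr ⟨le_rfl, Nat.le_add_left 1 y.length⟩⟩
              (fun k => S (x ++ [a]) ((y ++ [b]).take (y.length + 1 - k))
                - γ ((y ++ [b]).drop (y.length + 1 - k))))
            ((Finset.Icc 1 (x.length + 1)).sup'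
              ⟨1, Finset.mem_Icc.mpr ⟨le_rfl, Nat.le_add_left 1 x.length⟩⟩
              (fun k => S ((x ++ [a]).take (x.length + 1 - k)) (y ++ [b])
                - δ ((x ++ [a]).drop (x.length + 1 - k)))))) :
    (∀ x : List A, S x x = (x.map fun a => s a a).sum) ∧
    (∀ x : List A, x ≠ [] → 0 < S x x) ∧
    (∀ x y : List A, S x y ≤ S x x) ∧
    (∀ x y : List A, S y x ≤ S x x) := by
  have hS : IsGlobalSimilarity s γ δ S := ⟨hS0, hSe1, hSe2, hSrec⟩
  have hupper := hS.le_min_diagScore (fun a => (hsane1 a).le) hsane2 hsane3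
    (fun u hu => (hγpos u hu).le) (fun u hu => (hδpos u hu).le)
  have hdiag : ∀ x, S x x = diagScore s x := fun x =>
    le_antisymm ((hupper x x).trans (min_le_left _ _)) (hS.diagScore_le x)
  refine ⟨hdiag, fun x hx => ?_, fun x y => ?_, fun x y => ?_⟩
  · exact hdiag x ▸ diagScore_pos hsane1 hx
  · exact hdiag x ▸ (hupper x y).trans (min_le_left _ _)
  · exact hdiag x ▸ (hupper y x).trans (min_le_right _ _)

/-- If `s` is a sane scoring function and `γ, δ` are gap penalties, then the
global (Needleman-Wunsch) similarity `S` satisfies `S(x,x) = ∑ᵢ s(xᵢ,xᵢ)` and is itself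
sane: `S(x,x) > 0` for `x ≠ e`, `S(x,x) ≥ S(x,y)` and `S(x,x) ≥ S(y,x)`. -/
theorem globalSimilarity_sane {A : Type*} (s : A → A → ℝ) (γ δ : List A → ℝ)
    (S : List A → List A → ℝ)
    (hsane1 : ∀ a, 0 < s a a)
    (hsane2 : ∀ a b, s a b ≤ s a a)
    (hsane3 : ∀ a b, s b a ≤ s a a)
    (hγpos : ∀ u : List A, u ≠ [] → 0 < γ u)
    (hγsub : ∀ u v : List A, u ≠ [] → v ≠ [] → γ (u ++ v) ≤ γ u + γ v)
    (hδpos : ∀ u : List A, u ≠ [] → 0 < δ u)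
    (hδsub : ∀ u v : List A, u ≠ [] → v ≠ [] → δ (u ++ v) ≤ δ u + δ v)
    (hS0 : S [] [] = 0)
    (hSe1 : ∀ y : List A, y ≠ [] → S [] y = -γ y)
    (hSe2 : ∀ x : List A, x ≠ [] → S x [] = -δ x)
    (hSrec : ∀ (x y : List A) (a b : A),
      S (x ++ [a]) (y ++ [b]) =
        max (S x y + s a b)
          (max
            ((Finset.Icc 1 (y.length + 1)).sup'
              ⟨1, Finset.mem_Icc.mpr ⟨le_rfl, Nat.le_add_left 1 y.length⟩⟩
              (fun k => S (x ++ [a]) ((y ++ [b]).take (y.length + 1 - k))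
                - γ ((y ++ [b]).drop (y.length + 1 - k))))
            ((Finset.Icc 1 (x.length + 1)).sup'
              ⟨1, Finset.mem_Icc.mpr ⟨le_rfl, Nat.le_add_left 1 x.length⟩⟩
              (fun k => S ((x ++ [a]).take (x.length + 1 - k)) (y ++ [b])
                - δ ((x ++ [a]).drop (x.length + 1 - k)))))) :
    (∀ x : List A, S x x = (x.map fun a => s a a).sum) ∧
    (∀ x : List A, x ≠ [] → 0 < S x x) ∧
    (∀ x y : List A, S x y ≤ S x x) ∧
    (∀ x y : List A, S y x ≤ S x x) :=
  globalSimilarity_sane_general s γ δ S hsane1 hsane2 hsane3 hγpos hδpos hS0 hSe1 hSe2 hSrec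
end

section
/- Let Σ be a set, 1 ≤ p < ∞, ρ a separating quasi-metric on Σ* that is arbitrarily decomposable of order p, f : Σ → ℝ strictly positive and g : Σ → ℝ non-negative, with additive extensions f̄, ḡ to Σ* satisfying f̄(x) − f̄(y) ≤ ρ(x,y)ᵖ and ḡ(y) − ḡ(x) ≤ ρ(x,y)ᵖ for all x,y. Then Q(x,y) = min over factors x̃ of x and ỹ of y of ( f̄(x) − f̄(x̃) + ḡ(y) − ḡ(ỹ) + ρ(x̃,ỹ)ᵖ )^{1/p} defines a quasi-metric on Σ*. -/
open Real

section Helpers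

variable {A : Type*}

lemma sumh_nonneg (h : A → ℝ) (hh : ∀ a, 0 ≤ h a) (l : List A) : 0 ≤ (l.map h).sum :=
  List.sum_nonneg (by intro x hx; obtain ⟨a, _, rfl⟩ := List.mem_map.1 hx; exact hh a)

lemma sumh_sublist_le (h : A → ℝ) (hh : ∀ a, 0 ≤ h a) {l₁ l₂ : List A} (hs : l₁.Sublist l₂) :
    (l₁.map h).sum ≤ (l₂.map h).sum :=
  List.Sublist.sum_le_sum (hs.map h)
    (by intro x hx; obtain ⟨a, _, rfl⟩ := List.mem_map.1 hx; exact hh a)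

lemma sumh_infix_le (h : A → ℝ) (hh : ∀ a, 0 ≤ h a) {l₁ l₂ : List A} (hs : l₁ <:+: l₂) :
    (l₁.map h).sum ≤ (l₂.map h).sum :=
  sumh_sublist_le h hh hs.sublist

lemma droptake_infix (l : List A) (n m : ℕ) : (l.drop n).take m <:+: l :=
  List.infix_iff_prefix_suffix.2 ⟨l.drop n, List.take_prefix _ _, List.drop_suffix _ _⟩

lemma overlap_core (y : List A) (i j a b : ℕ) (hij : i ≤ j) :
    ∃ w : List A, w <:+: (y.drop i).take a ∧ w <:+: (y.drop j).take b ∧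
      ∀ h : A → ℝ, (∀ c, 0 ≤ h c) →
        (((y.drop i).take a).map h).sum + (((y.drop j).take b).map h).sum ≤
          (y.map h).sum + (w.map h).sum := by
  set u := (y.drop i).take a with hu
  set v := (y.drop j).take b with hv
  set k := i + a - j with hk
  have e1 : u.drop (j - i) = (y.drop j).take (a - (j - i)) := by
    rw [hu, List.drop_take, List.drop_drop]
    congr 2
    omega
  have e2 : v.take k = (u.drop (j - i)).take (min k b) := by
    rw [e1, hv, List.take_take, List.take_take]
    congr 1
    omega
  refine ⟨v.take k, ?_, (List.take_prefix k v).isInfix, ?_⟩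
  · rw [e2]
    exact (droptake_infix u (j - i) (min k b))
  · intro h hh
    have e3 : v.drop k = ((y.drop (i + a)).drop (j + k - (i + a))).take (b - k) := by
      rw [hv, List.drop_take, List.drop_drop, List.drop_drop]
      congr 2
      omega
    have hsub : (u ++ v.drop k).Sublist y := by
      have h1 : (u ++ v.drop k).Sublist (u ++ y.drop (i + a)) := by
        refine List.Sublist.append_left ?_ u
        rw [e3]
        exact (droptake_infix (y.drop (i + a)) _ _).sublist
      have h2 : u ++ y.drop (i + a) = y.drop i := by
        rw [hu]
        exact List.drop_take_append_drop y i a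
      exact h1.trans (h2 ▸ List.drop_sublist i y)
    have hsum : ((u ++ v.drop k).map h).sum ≤ (y.map h).sum := sumh_sublist_le h hh hsub
    have hvsplit : (v.map h).sum = ((v.take k).map h).sum + ((v.drop k).map h).sum := by
      conv_lhs => rw [← List.take_append_drop k v]
      simp [List.map_append]
    simp only [List.map_append, List.sum_append] at hsum
    linarith

lemma overlap {u v y : List A} (hu : u <:+: y) (hv : v <:+: y) :
    ∃ w : List A, w <:+: u ∧ w <:+: v ∧ ∀ h : A → ℝ, (∀ c, 0 ≤ h c) →
      (u.map h).sum + (v.map h).sum ≤ (y.map h).sum + (w.map h).sum := by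
  obtain ⟨s, t, hst⟩ := hu
  obtain ⟨s', t', hst'⟩ := hv
  have hu' : (y.drop s.length).take u.length = u := by
    rw [← hst, List.append_assoc, List.drop_left, List.take_left]
  have hv' : (y.drop s'.length).take v.length = v := by
    rw [← hst', List.append_assoc, List.drop_left, List.take_left]
  rcases le_total s.length s'.length with hle | hle
  · obtain ⟨w, hw1, hw2, hw3⟩ := overlap_core y s.length s'.length u.length v.length hle
    rw [hu'] at hw1
    rw [hv'] at hw2
    rw [hu', hv'] at hw3
    exact ⟨w, hw1, hw2, hw3⟩
  · obtain ⟨w, hw1, hw2, hw3⟩ := overlap_core y s'.length s.length v.length u.length hle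
    rw [hv'] at hw1
    rw [hu'] at hw2
    rw [hu', hv'] at hw3
    exact ⟨w, hw2, hw1, fun h hh => by linarith [hw3 h hh]⟩

lemma shift_mono (p : ℝ) (hp : 1 ≤ p) (t : ℝ) (ht : 0 ≤ t) :
    MonotoneOn (fun s : ℝ => (s + t) ^ p - s ^ p) (Set.Ici 0) := by
  have hp0 : (0 : ℝ) ≤ p := zero_le_one.trans hp
  have hcont : Continuous fun x : ℝ => x ^ p :=
    continuous_iff_continuousAt.2 fun x => Real.continuousAt_rpow_const x p (Or.inr hp0)
  have hder : ∀ s : ℝ, HasDerivAt (fun s : ℝ => (s + t) ^ p - s ^ p)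
      (p * (s + t) ^ (p - 1) * 1 - p * s ^ (p - 1)) s := by
    intro s
    exact ((Real.hasDerivAt_rpow_const (Or.inr hp)).comp s
      ((hasDerivAt_id s).add_const t)).sub (Real.hasDerivAt_rpow_const (Or.inr hp))
  apply monotoneOn_of_deriv_nonneg (convex_Ici 0)
  · exact ((hcont.comp (continuous_id.add continuous_const)).sub hcont).continuousOn
  · intro s _
    exact ((hder s).differentiableAt).differentiableWithinAt
  · intro s hs
    rw [interior_Ici] at hs
    rw [(hder s).deriv]
    have h1 : s ^ (p - 1) ≤ (s + t) ^ (p - 1) :=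
      Real.rpow_le_rpow (le_of_lt hs) (by linarith) (by linarith)
    nlinarith

lemma key_ineq (p : ℝ) (hp : 1 ≤ p) {a b α β : ℝ} (ha : 0 ≤ a) (hb : 0 ≤ b)
    (haα : a ≤ α) (hbβ : b ≤ β) :
    α ^ p - a ^ p + (β ^ p - b ^ p) + (a + b) ^ p ≤ (α + β) ^ p := by
  have hα : 0 ≤ α := ha.trans haα
  have hβ : 0 ≤ β := hb.trans hbβ
  have h1 := shift_mono p hp b hb (Set.mem_Ici.2 ha) (Set.mem_Ici.2 hα) haα
  have h2 := shift_mono p hp α hα (Set.mem_Ici.2 hb) (Set.mem_Ici.2 hβ) hbβ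
  simp only at h1 h2
  rw [add_comm b α, add_comm β α] at h2
  linarith

end Helpers

/-- main theorem: Given a separating quasi-metric `ρ` on `A*` that is
arbitrarily decomposable of order `p`, a strictly positive `f` and non-negative `g` on `A`
whose additive extensions satisfy `f̄ x - f̄ y ≤ ρ(x,y)ᵖ` and `ḡ y - ḡ x ≤ ρ(x,y)ᵖ`, the
function `Q(x,y) = min over factors x̃ ⊑ x, ỹ ⊑ y of
(f̄ x - f̄ x̃ + ḡ y - ḡ ỹ + ρ(x̃,ỹ)ᵖ)^(1/p)` is a quasi-metric on `A*`. -/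
theorem localSimilarity_quasiMetric {A : Type*} (p : ℝ) (hp : 1 ≤ p)
    (ρ : List A → List A → ℝ) (f g : A → ℝ) (Q : List A → List A → ℝ)
    -- ρ is a separating quasi-metric
    (hρnn : ∀ x y : List A, 0 ≤ ρ x y)
    (hρ0 : ∀ x : List A, ρ x x = 0)
    (hρsep : ∀ x y : List A, ρ x y = 0 → x = y)
    (hρtri : ∀ x y z : List A, ρ x z ≤ ρ x y + ρ y z)
    -- ρ is arbitrarily decomposable of order p
    (hdec1 : ∀ x y y' : List A, y' <:+: y →
      ∃ x₁ x' x₂ y₁ u v y₂ : List A,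
        x = x₁ ++ x' ++ x₂ ∧ y = y₁ ++ u ++ y' ++ v ++ y₂ ∧
        ρ x₁ y₁ ^ p + ρ x' y' ^ p + ρ x₂ y₂ ^ p ≤ ρ x y ^ p)
    (hdec2 : ∀ x y x' : List A, x' <:+: x →
      ∃ y₁ y' y₂ x₁ u v x₂ : List A,
        y = y₁ ++ y' ++ y₂ ∧ x = x₁ ++ u ++ x' ++ v ++ x₂ ∧
        ρ x₁ y₁ ^ p + ρ x' y' ^ p + ρ x₂ y₂ ^ p ≤ ρ x y ^ p)
    -- f strictly positive, g non-negative
    (hf : ∀ a, 0 < f a) (hg : ∀ a, 0 ≤ g a)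
    -- relations between the additive extensions and ρ
    (hfρ : ∀ x y : List A, (x.map f).sum - (y.map f).sum ≤ ρ x y ^ p)
    (hgρ : ∀ x y : List A, (y.map g).sum - (x.map g).sum ≤ ρ x y ^ p)
    -- Q is the minimum over pairs of factors
    (hQ1 : ∀ x y : List A, ∃ xt yt : List A, xt <:+: x ∧ yt <:+: y ∧
      Q x y = ((x.map f).sum - (xt.map f).sum + ((y.map g).sum - (yt.map g).sum)
        + ρ xt yt ^ p) ^ (1/p))
    (hQ2 : ∀ x y xt yt : List A, xt <:+: x → yt <:+: y →
      Q x y ≤ ((x.map f).sum - (xt.map f).sum + ((y.map g).sum - (yt.map g).sum)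
        + ρ xt yt ^ p) ^ (1/p)) :
    (∀ x y : List A, 0 ≤ Q x y) ∧
    (∀ x : List A, Q x x = 0) ∧
    (∀ x y : List A, Q x y = 0 → Q y x = 0 → x = y) ∧
    (∀ x y z : List A, Q x z ≤ Q x y + Q y z) := by
  have hp0 : (0:ℝ) < p := lt_of_lt_of_le zero_lt_one hp
  have hpne : p ≠ 0 := ne_of_gt hp0
  have hpinv : (0:ℝ) ≤ 1/p := by positivity
  have hfnn : ∀ a, 0 ≤ f a := fun a => (hf a).le
  have hFle : ∀ {u x : List A}, u <:+: x → (u.map f).sum ≤ (x.map f).sum :=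
    fun h => sumh_infix_le f hfnn h
  have hGle : ∀ {u x : List A}, u <:+: x → (u.map g).sum ≤ (x.map g).sum :=
    fun h => sumh_infix_le g hg h
  -- a factor with the full f-weight is the whole word
  have hfull : ∀ {u x' : List A}, u <:+: x' →
      (x'.map f).sum - (u.map f).sum = 0 → u = x' := by
    intro u x' hinf hsum
    obtain ⟨s, t, hst⟩ := hinf
    have hsplit : (x'.map f).sum = (s.map f).sum + (u.map f).sum + (t.map f).sum := by
      rw [← hst]; simp [List.map_append]; ring
    have hsn := sumh_nonneg f hfnn s
    have htn := sumh_nonneg f hfnn t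
    have hpos : ∀ (l : List A), l ≠ [] → 0 < (l.map f).sum := by
      intro l hl
      refine List.sum_pos _ ?_ (by simpa using hl)
      intro z hz
      obtain ⟨c, _, rfl⟩ := List.mem_map.1 hz
      exact hf c
    have hs : s = [] := by
      by_contra hne
      have := hpos s hne
      linarith
    have ht : t = [] := by
      by_contra hne
      have := hpos t hne
      linarith
    rw [hs, ht] at hst
    simpa using hst
  have hQnn : ∀ x y : List A, 0 ≤ Q x y := by
    intro x y
    obtain ⟨xt, yt, hxt, hyt, hq⟩ := hQ1 x y
    rw [hq]
    apply Real.rpow_nonneg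
    have h1 := hFle hxt
    have h2 := hGle hyt
    have h3 : 0 ≤ ρ xt yt ^ p := Real.rpow_nonneg (hρnn xt yt) p
    linarith
  -- from Q x y = 0 we get that x is a factor of y
  have hsep : ∀ x y : List A, Q x y = 0 → x <:+: y := by
    intro x y hxy
    obtain ⟨xt, yt, hxt, hyt, hq⟩ := hQ1 x y
    rw [hxy] at hq
    have h1 := hFle hxt
    have h2 := hGle hyt
    have h3 : 0 ≤ ρ xt yt ^ p := Real.rpow_nonneg (hρnn xt yt) p
    have hE : (x.map f).sum - (xt.map f).sum + ((y.map g).sum - (yt.map g).sum)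
        + ρ xt yt ^ p = 0 := by
      by_contra hne
      have hEpos : 0 < (x.map f).sum - (xt.map f).sum + ((y.map g).sum - (yt.map g).sum)
          + ρ xt yt ^ p := lt_of_le_of_ne (by linarith) (Ne.symm hne)
      have := Real.rpow_pos_of_pos hEpos (1/p)
      rw [← hq] at this
      exact lt_irrefl 0 this
    have hρz : ρ xt yt = 0 := by
      have hppow : ρ xt yt ^ p = 0 := by linarith
      by_contra hne
      have hρpos : 0 < ρ xt yt := lt_of_le_of_ne (hρnn _ _) (Ne.symm hne)
      have := Real.rpow_pos_of_pos hρpos p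
      linarith
    have hxeq : xt = x := hfull hxt (by linarith)
    have hxyeq : xt = yt := hρsep _ _ hρz
    rw [← hxeq, hxyeq]
    exact hyt
  refine ⟨hQnn, ?_, ?_, ?_⟩
  · intro x
    have h1 := hQ2 x x x x (List.infix_refl x) (List.infix_refl x)
    have e : (x.map f).sum - (x.map f).sum + ((x.map g).sum - (x.map g).sum)
        + ρ x x ^ p = 0 := by
      rw [hρ0 x, Real.zero_rpow hpne]; ring
    rw [e, Real.zero_rpow (one_div_ne_zero hpne)] at h1
    exact le_antisymm h1 (hQnn x x)
  · intro x y hxy hyx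
    exact (hsep x y hxy).sublist.antisymm (hsep y x hyx).sublist
  · intro x y z
    obtain ⟨xt, yt, hxt, hyt, hA⟩ := hQ1 x y
    obtain ⟨yh, zt, hyh, hzt, hB⟩ := hQ1 y z
    obtain ⟨w, hw1, hw2, hwsum⟩ := overlap hyt hyh
    obtain ⟨x₁, x', x₂, y₁, u, v, y₂, hxsplit, hysplit, hdecA⟩ := hdec1 xt yt w hw1
    obtain ⟨z₁, z', z₂, a₁, u', v', a₂, hzsplit, hyhsplit, hdecB⟩ := hdec2 yh zt w hw2
    have hx' : x' <:+: x := List.IsInfix.trans ⟨x₁, x₂, hxsplit.symm⟩ hxt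
    have hz' : z' <:+: z := List.IsInfix.trans ⟨z₁, z₂, hzsplit.symm⟩ hzt
    have hQxz := hQ2 x z x' z' hx' hz'
    set a := ρ x' w with ha
    set b := ρ w z' with hb
    set Aval := (x.map f).sum - (xt.map f).sum + ((y.map g).sum - (yt.map g).sum)
        + ρ xt yt ^ p with hAval
    set Bval := (y.map f).sum - (yh.map f).sum + ((z.map g).sum - (zt.map g).sum)
        + ρ yh zt ^ p with hBval
    have hFxt : (xt.map f).sum = (x₁.map f).sum + (x'.map f).sum + (x₂.map f).sum := by
      rw [hxsplit]; simp [List.map_append]; ring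
    have hFyt : (yt.map f).sum = (y₁.map f).sum + (u.map f).sum + (w.map f).sum
        + (v.map f).sum + (y₂.map f).sum := by
      rw [hysplit]; simp [List.map_append]; ring
    have hGyh : (yh.map g).sum = (a₁.map g).sum + (u'.map g).sum + (w.map g).sum
        + (v'.map g).sum + (a₂.map g).sum := by
      rw [hyhsplit]; simp [List.map_append]; ring
    have hGzt : (zt.map g).sum = (z₁.map g).sum + (z'.map g).sum + (z₂.map g).sum := by
      rw [hzsplit]; simp [List.map_append]; ring
    have hf1 := hfρ x₁ y₁
    have hf2 := hfρ x₂ y₂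
    have hg1 := hgρ a₁ z₁
    have hg2 := hgρ a₂ z₂
    have hfw := hwsum f hfnn
    have hgw := hwsum g hg
    have hun : 0 ≤ (u.map f).sum := sumh_nonneg f hfnn u
    have hvn : 0 ≤ (v.map f).sum := sumh_nonneg f hfnn v
    have hun' : 0 ≤ (u'.map g).sum := sumh_nonneg g hg u'
    have hvn' : 0 ≤ (v'.map g).sum := sumh_nonneg g hg v'
    have hr1 : 0 ≤ ρ x₁ y₁ ^ p := Real.rpow_nonneg (hρnn _ _) p
    have hr2 : 0 ≤ ρ x₂ y₂ ^ p := Real.rpow_nonneg (hρnn _ _) p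
    have hr3 : 0 ≤ ρ a₁ z₁ ^ p := Real.rpow_nonneg (hρnn _ _) p
    have hr4 : 0 ≤ ρ a₂ z₂ ^ p := Real.rpow_nonneg (hρnn _ _) p
    have hAnn : 0 ≤ Aval := by
      rw [hAval]
      have h1 := hFle hxt
      have h2 := hGle hyt
      have h3 : 0 ≤ ρ xt yt ^ p := Real.rpow_nonneg (hρnn xt yt) p
      linarith
    have hBnn : 0 ≤ Bval := by
      rw [hBval]
      have h1 := hFle hyh
      have h2 := hGle hzt
      have h3 : 0 ≤ ρ yh zt ^ p := Real.rpow_nonneg (hρnn yh zt) p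
      linarith
    have hapA : a ^ p ≤ Aval := by
      rw [hAval]
      have h1 := hFle hxt
      have h2 := hGle hyt
      linarith
    have hbpB : b ^ p ≤ Bval := by
      rw [hBval]
      have h1 := hFle hyh
      have h2 := hGle hzt
      linarith
    have haA : a ≤ Aval ^ (1/p) := by
      calc a = (a ^ p) ^ (1/p) := by rw [one_div, Real.rpow_rpow_inv (hρnn x' w) hpne]
        _ ≤ Aval ^ (1/p) := Real.rpow_le_rpow (Real.rpow_nonneg (hρnn x' w) p) hapA hpinv
    have hbB : b ≤ Bval ^ (1/p) := by
      calc b = (b ^ p) ^ (1/p) := by rw [one_div, Real.rpow_rpow_inv (hρnn w z') hpne]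
        _ ≤ Bval ^ (1/p) := Real.rpow_le_rpow (Real.rpow_nonneg (hρnn w z') p) hbpB hpinv
    have hkey := key_ineq p hp (hρnn x' w) (hρnn w z') haA hbB
    rw [one_div] at hkey
    rw [Real.rpow_inv_rpow hAnn hpne, Real.rpow_inv_rpow hBnn hpne] at hkey
    rw [← one_div] at hkey
    have hρxz : ρ x' z' ^ p ≤ (a + b) ^ p :=
      Real.rpow_le_rpow (hρnn x' z') (hρtri x' w z') hp0.le
    have hC : (x.map f).sum - (x'.map f).sum + ((z.map g).sum - (z'.map g).sum)
        + ρ x' z' ^ p ≤ (Aval ^ (1/p) + Bval ^ (1/p)) ^ p := by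
      linarith [hkey, hρxz, hFxt, hFyt, hGzt, hGyh, hf1, hf2, hg1, hg2, hdecA, hdecB,
        hfw, hgw, hun, hvn, hun', hvn', hr1, hr2, hr3, hr4, hAval.le, hAval.ge,
        hBval.le, hBval.ge]
    have hCnn : 0 ≤ (x.map f).sum - (x'.map f).sum + ((z.map g).sum - (z'.map g).sum)
        + ρ x' z' ^ p := by
      have h1 := hFle hx'
      have h2 := hGle hz'
      have h3 : 0 ≤ ρ x' z' ^ p := Real.rpow_nonneg (hρnn x' z') p
      linarith
    have habnn : 0 ≤ Aval ^ (1/p) + Bval ^ (1/p) :=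
      add_nonneg (Real.rpow_nonneg hAnn _) (Real.rpow_nonneg hBnn _)
    calc Q x z ≤ ((x.map f).sum - (x'.map f).sum + ((z.map g).sum - (z'.map g).sum)
          + ρ x' z' ^ p) ^ (1/p) := hQxz
      _ ≤ ((Aval ^ (1/p) + Bval ^ (1/p)) ^ p) ^ (1/p) :=
          Real.rpow_le_rpow hCnn hC hpinv
      _ = Aval ^ (1/p) + Bval ^ (1/p) := by
          rw [one_div] at habnn ⊢
          rw [Real.rpow_rpow_inv habnn hpne]
      _ = Q x y + Q y z := by rw [hA, hB]
end

section
/- In the setting of the construction Q(x,y) = min over factors x̃ ⊑ x, ỹ ⊑ y of ( f̄(x) − f̄(x̃) + ḡ(y) − ḡ(ỹ) + ρ(x̃,ỹ)ᵖ )^{1/p} with g ≡ 0: Q(x,y) = 0 if and only if x is a factor of y. In particular, the partial order associated with Q (x ≤ y iff Q(x,y) = 0) is the substring partial order on Σ*. -/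
open Real

/-- In the local quasi-metric construction with `g ≡ 0`, i.e.
`Q(x,y) = min over factors x̃ ⊑ x, ỹ ⊑ y of (f̄ x - f̄ x̃ + ρ(x̃,ỹ)ᵖ)^(1/p)`,
one has `Q(x,y) = 0` if and only if `x` is a factor of `y`; hence the partial order
associated with `Q` is the substring partial order on `A*`. -/
theorem localQuasiMetric_order_eq_factor {A : Type*} (p : ℝ) (hp : 1 ≤ p)
    (ρ : List A → List A → ℝ) (f : A → ℝ) (Q : List A → List A → ℝ)
    (hρnn : ∀ x y : List A, 0 ≤ ρ x y)
    (hρ0 : ∀ x : List A, ρ x x = 0)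
    (hρsep : ∀ x y : List A, ρ x y = 0 → x = y)
    (hρtri : ∀ x y z : List A, ρ x z ≤ ρ x y + ρ y z)
    (hdec1 : ∀ x y y' : List A, y' <:+: y →
      ∃ x₁ x' x₂ y₁ u v y₂ : List A,
        x = x₁ ++ x' ++ x₂ ∧ y = y₁ ++ u ++ y' ++ v ++ y₂ ∧
        ρ x₁ y₁ ^ p + ρ x' y' ^ p + ρ x₂ y₂ ^ p ≤ ρ x y ^ p)
    (hdec2 : ∀ x y x' : List A, x' <:+: x →
      ∃ y₁ y' y₂ x₁ u v x₂ : List A,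
        y = y₁ ++ y' ++ y₂ ∧ x = x₁ ++ u ++ x' ++ v ++ x₂ ∧
        ρ x₁ y₁ ^ p + ρ x' y' ^ p + ρ x₂ y₂ ^ p ≤ ρ x y ^ p)
    (hf : ∀ a, 0 < f a)
    (hfρ : ∀ x y : List A, (x.map f).sum - (y.map f).sum ≤ ρ x y ^ p)
    (hQ1 : ∀ x y : List A, ∃ xt yt : List A, xt <:+: x ∧ yt <:+: y ∧
      Q x y = ((x.map f).sum - (xt.map f).sum + ρ xt yt ^ p) ^ (1/p))
    (hQ2 : ∀ x y xt yt : List A, xt <:+: x → yt <:+: y →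
      Q x y ≤ ((x.map f).sum - (xt.map f).sum + ρ xt yt ^ p) ^ (1/p)) :
    ∀ x y : List A, Q x y = 0 ↔ x <:+: y := by
  have hp0 : p ≠ 0 := by linarith
  have hip0 : (1/p : ℝ) ≠ 0 := by positivity
  have hsum_nonneg : ∀ l : List A, 0 ≤ (l.map f).sum := by
    intro l
    apply List.sum_nonneg
    intro a ha
    simp only [List.mem_map] at ha
    obtain ⟨b, _, rfl⟩ := ha
    exact (hf b).le
  have hsum_eq_nil : ∀ l : List A, (l.map f).sum = 0 → l = [] := by
    intro l hl
    cases l with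
    | nil => rfl
    | cons a t =>
      exfalso
      simp only [List.map_cons, List.sum_cons] at hl
      have := hsum_nonneg t
      nlinarith [hf a]
  have hsub_le : ∀ xt s t : List A, ((s ++ xt ++ t).map f).sum =
      (s.map f).sum + (xt.map f).sum + (t.map f).sum := by
    intro xt s t
    simp [List.map_append, List.sum_append, add_assoc]
  intro x y
  constructor
  · intro hQ
    obtain ⟨xt, yt, hxt, hyt, hEq⟩ := hQ1 x y
    obtain ⟨s, t, hx⟩ := hxt
    have hsums := hsub_le xt s t
    subst hx
    have hρp : 0 ≤ ρ xt yt ^ p := Real.rpow_nonneg (hρnn _ _) p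
    have hbase : 0 ≤ (((s ++ xt ++ t).map f).sum) - (xt.map f).sum + ρ xt yt ^ p := by
      have := hsum_nonneg s
      have := hsum_nonneg t
      nlinarith
    rw [hQ] at hEq
    have hzero := (Real.rpow_eq_zero hbase hip0).mp hEq.symm
    have h1 : (((s ++ xt ++ t)).map f).sum - (xt.map f).sum = 0 := by
      have := hsum_nonneg s
      have := hsum_nonneg t
      nlinarith
    have h2 : ρ xt yt ^ p = 0 := by linarith
    have hρz : ρ xt yt = 0 := (Real.rpow_eq_zero (hρnn xt yt) hp0).mp h2
    have hxy : xt = yt := hρsep _ _ hρz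
    have hs0 : (s.map f).sum = 0 := by
      have := hsum_nonneg s
      have := hsum_nonneg t
      nlinarith
    have ht0 : (t.map f).sum = 0 := by
      have := hsum_nonneg s
      nlinarith
    rw [hsum_eq_nil s hs0, hsum_eq_nil t ht0]
    simpa [hxy] using hyt
  · intro hxy
    have hle := hQ2 x y x x (List.infix_refl x) hxy
    have : ((x.map f).sum - (x.map f).sum + ρ x x ^ p) = 0 := by
      rw [hρ0 x, Real.zero_rpow hp0]; ring
    rw [this, Real.zero_rpow hip0] at hle
    obtain ⟨xt, yt, hxt, hyt, hEq⟩ := hQ1 x y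
    obtain ⟨s, t, hx⟩ := hxt
    have hρp : 0 ≤ ρ xt yt ^ p := Real.rpow_nonneg (hρnn _ _) p
    have hbase : 0 ≤ (x.map f).sum - (xt.map f).sum + ρ xt yt ^ p := by
      rw [← hx, hsub_le xt s t]
      have := hsum_nonneg s
      have := hsum_nonneg t
      nlinarith
    have hge : 0 ≤ Q x y := hEq ▸ Real.rpow_nonneg hbase _
    linarith
end

section
/- Let X be a finite set, H : X × X → ℝ a symmetric similarity with H(x,x) ≥ H(x,y), 1 ≤ p < ∞, and suppose M(x,y) = (H(x,x) + H(y,y) − 2H(x,y))^{1/p} is a metric on X. For ξ ∈ ℝ let Z_ξ = { x ∈ X : H(x,x) = ξ }. Then for every query point x and threshold κ, the similarity range query { y ∈ X : H(x,y) ≥ κ } equals the disjoint union over ξ of the sets { y ∈ Z_ξ : M(x,y) ≤ ε(x,ξ,κ) }, where ε(x,ξ,κ) = (H(x,x) + ξ − 2κ)^{1/p} (with the convention that the ball is empty when H(x,x) + ξ − 2κ < 0). -/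
open Real

/-- Fiber decomposition of similarity range queries. For a finite set `X`
with symmetric sane similarity `H` and metric `M(x,y) = (H(x,x) + H(y,y) - 2·H(x,y))^(1/p)`,
every similarity range query `{y : H(x,y) ≥ κ}` is the (disjoint) union over `ξ` of the
metric balls `{y ∈ Z_ξ : M(x,y) ≤ (H(x,x) + ξ - 2κ)^(1/p)}`, with the convention that the
ball is empty when `H(x,x) + ξ - 2κ < 0`. -/
theorem fiber_decomposition {X : Type*} [Fintype X] (H : X → X → ℝ) (p : ℝ) (hp : 1 ≤ p)
    (hsym : ∀ x y, H x y = H y x)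
    (hsane : ∀ x y, H x y ≤ H x x)
    (M : X → X → ℝ)
    (hM : ∀ x y, M x y = (H x x + H y y - 2 * H x y) ^ (1/p))
    (hMeq : ∀ x y, M x y = 0 ↔ x = y)
    (hMsym : ∀ x y, M x y = M y x)
    (hMtri : ∀ x y z, M x z ≤ M x y + M y z) :
    ∀ (x : X) (κ : ℝ),
      ({y : X | κ ≤ H x y} =
        ⋃ ξ : ℝ, {y : X | H y y = ξ ∧ 0 ≤ H x x + ξ - 2 * κ ∧
          M x y ≤ (H x x + ξ - 2 * κ) ^ (1/p)}) ∧
      (∀ ξ₁ ξ₂ : ℝ, ξ₁ ≠ ξ₂ →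
        Disjoint
          {y : X | H y y = ξ₁ ∧ 0 ≤ H x x + ξ₁ - 2 * κ ∧
            M x y ≤ (H x x + ξ₁ - 2 * κ) ^ (1/p)}
          {y : X | H y y = ξ₂ ∧ 0 ≤ H x x + ξ₂ - 2 * κ ∧
            M x y ≤ (H x x + ξ₂ - 2 * κ) ^ (1/p)}) := by
  intro x κ
  have hp0 : 0 < 1/p := by positivity
  constructor
  · ext y
    simp only [Set.mem_setOf_eq, Set.mem_iUnion]
    constructor
    · intro hκ
      refine ⟨H y y, rfl, ?_, ?_⟩
      · have h1 := hsane x y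
        have h2 : H x y ≤ H y y := (hsym x y ▸ hsane y x)
        linarith
      · rw [hM]
        apply Real.rpow_le_rpow
        · have h1 := hsane x y
          have h2 : H x y ≤ H y y := (hsym x y ▸ hsane y x)
          linarith
        · linarith
        · linarith
    · rintro ⟨ξ, hξ, hnn, hle⟩
      subst hξ
      rw [hM] at hle
      have harg : 0 ≤ H x x + H y y - 2 * H x y := by
        have h1 := hsane x y
        have h2 : H x y ≤ H y y := (hsym x y ▸ hsane y x)
        linarith
      have key : H x x + H y y - 2 * H x y ≤ H x x + H y y - 2 * κ := by
        by_contra hc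
        push_neg at hc
        have := Real.rpow_lt_rpow hnn hc hp0
        linarith
      linarith
  · intro ξ₁ ξ₂ hne
    rw [Set.disjoint_left]
    rintro y ⟨h1, -, -⟩ ⟨h2, -, -⟩
    exact hne (h1 ▸ h2)
end
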